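/- Let M be the free ℂ-algebra on generators t_i, i ∈ ℕ (including 0), and M₀ the free ℂ-algebra on generators t̄_i, i ≥ 1. For i ≥ j ≥ 1 write T̄(i,j) = Σ t̄_{n₁} ⋯ t̄_{n_j}, the sum over compositions of i into j positive parts. Let Δ_L : M → M₀ ⊗ M be the unique unital algebra homomorphism with Δ_L(t₀) = 1 ⊗ t₀ and Δ_L(t_i) = Σ_{j=1}^{i} T̄(i,j) ⊗ t_j for i ≥ 1. Then the fixed-point subalgebra {h ∈ M : Δ_L(h) = 1 ⊗ h} equals the subalgebra of M generated by t₀, which is a polynomial algebra ℂ[t₀]. -/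

import Mathlib

open scoped TensorProduct

noncomputable section
namespace Stmt13

/-- `M = M(ℂ[x])`, the free ℂ-algebra on generators `t_i`, `i ∈ ℕ` (including `t₀`). -/
abbrev M : Type := FreeAlgebra ℂ ℕ

/-- `M₀ = M₀(ℂ[x])`, the free ℂ-algebra on generators `t̄_i`, `i ≥ 1`. -/
abbrev M₀ : Type := FreeAlgebra ℂ ℕ+

/-- The generator `t_i` of `M`. -/
def t (i : ℕ) : M := FreeAlgebra.ι ℂ i

/-- The generator `t̄_i` of `M₀`. -/
def tbar (i : ℕ+) : M₀ := FreeAlgebra.ι ℂ i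

/-- `T̄(i,j) = Σ t̄_{n₁} ⋯ t̄_{n_j}`, the sum over compositions of `i` into `j`
positive parts. -/
def Tbar (i j : ℕ) : M₀ :=
  ∑ c ∈ Finset.univ.filter (fun c : Composition i => c.length = j),
    (c.blocks.attach.map (fun p => tbar ⟨p.1, c.blocks_pos p.2⟩)).prod

/-- The coaction `Δ_L : M → M₀ ⊗ M`, the unique algebra map with `Δ_L(t₀) = 1 ⊗ t₀`
and `Δ_L(t_i) = Σ_{j=1}^{i} T̄(i,j) ⊗ t_j` for `i ≥ 1`. -/
def ΔL : M →ₐ[ℂ] M₀ ⊗[ℂ] M :=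
  FreeAlgebra.lift ℂ (fun i : ℕ =>
    if i = 0 then (1 : M₀) ⊗ₜ[ℂ] t 0
    else ∑ j ∈ Finset.Icc 1 i, Tbar i j ⊗ₜ[ℂ] t j)

/-- The counit of `M₀`, killing all generators. -/
def ε₀ : M₀ →ₐ[ℂ] ℂ := FreeAlgebra.lift ℂ (0 : ℕ+ → ℂ)

lemma ε₀_tbar (i : ℕ+) : ε₀ (tbar i) = 0 := by
  simp [ε₀, tbar, FreeAlgebra.lift_ι_apply]

lemma ε₀_Tbar {i j : ℕ} (hj : 1 ≤ j) : ε₀ (Tbar i j) = 0 := by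
  rw [Tbar, map_sum]
  refine Finset.sum_eq_zero fun c hc => ?_
  rw [Finset.mem_filter] at hc
  have hne : c.blocks ≠ [] := by
    intro h
    have : c.length = 0 := by simp [Composition.length, h]
    omega
  rw [map_list_prod, List.map_map]
  refine List.prod_eq_zero ?_
  obtain ⟨x, hx⟩ := List.exists_mem_of_ne_nil _ (List.attach_ne_nil_iff.mpr hne)
  refine List.mem_map.mpr ⟨x, hx, ?_⟩
  simp [ε₀_tbar]
  exact ε₀_tbar _

/-- Embedding of scalars composed with the counit. -/
def f : M₀ →ₐ[ℂ] M := (Algebra.ofId ℂ M).comp ε₀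

/-- `ε₀ ⊗ id` followed by multiplication. -/
def E' : M₀ ⊗[ℂ] M →ₐ[ℂ] M :=
  Algebra.TensorProduct.lift f (AlgHom.id ℂ M) (fun x y => by
    show f x * y = y * f x
    simp only [f, AlgHom.comp_apply, Algebra.ofId_apply]
    exact Algebra.commutes _ _)

lemma E'_tmul (a : M₀) (b : M) : E' (a ⊗ₜ[ℂ] b) = f a * b :=
  Algebra.TensorProduct.lift_tmul _ _ _ _ _

lemma E_mem_adjoin (h : M) : E' (ΔL h) ∈ Algebra.adjoin ℂ ({t 0} : Set M) := by
  induction h using FreeAlgebra.induction with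
  | grade0 r => rw [AlgHom.commutes, AlgHom.commutes]; exact Subalgebra.algebraMap_mem _ r
  | grade1 i =>
    rw [ΔL, FreeAlgebra.lift_ι_apply]
    by_cases hi : i = 0
    · rw [if_pos hi, E'_tmul, map_one, one_mul]
      exact Algebra.subset_adjoin (Set.mem_singleton _)
    · rw [if_neg hi, map_sum]
      have : ∀ j ∈ Finset.Icc 1 i, E' (Tbar i j ⊗ₜ[ℂ] t j) = 0 := by
        intro j hj
        rw [E'_tmul]
        have : f (Tbar i j) = 0 := by
          rw [f, AlgHom.comp_apply, ε₀_Tbar (Finset.mem_Icc.mp hj).1, map_zero]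
        rw [this, zero_mul]
      rw [Finset.sum_congr rfl this, Finset.sum_const, smul_zero]
      exact Subalgebra.zero_mem _
  | mul a b ha hb => rw [map_mul, map_mul]; exact Subalgebra.mul_mem _ ha hb
  | add a b ha hb => rw [map_add, map_add]; exact Subalgebra.add_mem _ ha hb

theorem fixed_points_polynomial_line :
    -- the fixed-point subalgebra equals the subalgebra generated by t₀
    (∀ h : M, ΔL h = 1 ⊗ₜ[ℂ] h ↔ h ∈ Algebra.adjoin ℂ ({t 0} : Set M)) ∧
    -- which is a polynomial algebra ℂ[t₀]
    Function.Injective ((Polynomial.aeval (t 0)) : Polynomial ℂ →ₐ[ℂ] M) := by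
  constructor
  · intro h
    constructor
    · intro hfix
      have : E' (ΔL h) = h := by rw [hfix, E'_tmul, map_one, one_mul]
      rw [← this]
      exact E_mem_adjoin h
    · intro hmem
      have hsub : Algebra.adjoin ℂ ({t 0} : Set M) ≤
          AlgHom.equalizer ΔL (Algebra.TensorProduct.includeRight : M →ₐ[ℂ] M₀ ⊗[ℂ] M) := by
        refine Algebra.adjoin_le ?_
        rw [Set.singleton_subset_iff]
        show ΔL (t 0) = Algebra.TensorProduct.includeRight (t 0)
        rw [t, ΔL, FreeAlgebra.lift_ι_apply, if_pos rfl,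
          Algebra.TensorProduct.includeRight_apply, t]
      have := hsub hmem
      rw [AlgHom.mem_equalizer] at this
      rw [this, Algebra.TensorProduct.includeRight_apply]
  · have key : ∀ p : Polynomial ℂ,
        (FreeAlgebra.lift ℂ (fun i : ℕ => if i = 0 then (Polynomial.X : Polynomial ℂ) else 0))
          (Polynomial.aeval (t 0) p) = p := by
      intro p
      rw [← Polynomial.aeval_algHom_apply]
      have : (FreeAlgebra.lift ℂ (fun i : ℕ => if i = 0 then (Polynomial.X : Polynomial ℂ) else 0)) (t 0)
          = Polynomial.X := by rw [t, FreeAlgebra.lift_ι_apply, if_pos rfl]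
      rw [this, Polynomial.aeval_X_left_apply]
    exact Function.LeftInverse.injective key

end Stmt13
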